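/- For a random k×k matrix M with i.i.d. standard complex Gaussian entries, E|det(M)|^{2t} ≤ E|Perm(M)|^{2t} for every positive integer t. -/

import Mathlib

/-!
Expanding `|det M|^(2t) = det M ^ t * conj (det M) ^ t` over pairs of `t`-tuples `σ, τ` of
permutations produces monomials in the entries and their conjugates. By independence the
expectation of each monomial is a product of the one-variable moments
`E[z^a * conj z^b] = δ_{ab} a!`, hence a nonnegative real `c(σ, τ)`. So
`E|det M|^(2t) = ∑ sign σ sign τ c(σ, τ)` while `E|Perm M|^(2t) = ∑ c(σ, τ)`, and the triangle
inequality compares them. The argument works for any weight `w` with `‖w‖ ≤ 1` in place of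
the sign.
-/

open MeasureTheory ProbabilityTheory

/-- `M` is a random `k × k` matrix whose entries are i.i.d. standard complex Gaussian
random variables, characterized by independence of the entries together with the
mixed moments `E[x^a * conj x ^ b] = a! * δ_{a b}` of a standard complex Gaussian. -/
def IsIIDStdComplexGaussianMatrix {Ω : Type*} [MeasurableSpace Ω] (P : Measure Ω)
    {k : ℕ} (M : Ω → Matrix (Fin k) (Fin k) ℂ) : Prop :=
  (∀ i j, Measurable fun ω => M ω i j) ∧
  iIndepFun (fun p : Fin k × Fin k => fun ω => M ω p.1 p.2) P ∧
  (∀ i j (a b : ℕ), Integrable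
      (fun ω => (M ω i j) ^ a * (starRingEnd ℂ) (M ω i j) ^ b) P) ∧
  (∀ i j (a b : ℕ),
    ∫ ω, (M ω i j) ^ a * (starRingEnd ℂ) (M ω i j) ^ b ∂P
      = if a = b then (a.factorial : ℂ) else 0)

open Finset ComplexConjugate

lemma ProbabilityTheory.iIndepFun.integrable_fun_prod_comp {Ω ι 𝕜 : Type*} [Fintype ι]
    [NormedCommRing 𝕜] {mΩ : MeasurableSpace Ω} {μ : Measure Ω} {𝓧 : ι → Type*}
    {m𝓧 : ∀ i, MeasurableSpace (𝓧 i)} {X : (i : ι) → Ω → 𝓧 i} {f : (i : ι) → 𝓧 i → 𝕜}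
    (hX : iIndepFun X μ) (mX : ∀ i, AEMeasurable (X i) μ)
    (hf : ∀ i, Integrable (f i) (μ.map (X i))) :
    Integrable (fun ω ↦ ∏ i, f i (X i ω)) μ := by
  have := hX.isProbabilityMeasure
  have h := Integrable.fintype_prod_dep hf
  rw [← hX.map_fun_eq_pi_map mX] at h
  exact h.comp_aemeasurable (by fun_prop)

lemma Complex.ofReal_norm_pow_two_mul (z : ℂ) (t : ℕ) :
    ((‖z‖ ^ (2 * t) : ℝ) : ℂ) = z ^ t * conj z ^ t := by
  rw [pow_mul, Complex.ofReal_pow, ← Complex.normSq_eq_norm_sq, ← Complex.mul_conj, mul_pow]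

namespace Matrix

variable {n R : Type*} [Fintype n] [DecidableEq n]

/-- Schur's generalized matrix function with weight `w`. -/
def permWeightedSum [CommSemiring R] (w : Equiv.Perm n → R) (A : Matrix n n R) : R :=
  ∑ σ, w σ * ∏ i, A (σ i) i

lemma det_eq_permWeightedSum [CommRing R] (A : Matrix n n R) :
    A.det = permWeightedSum (fun σ ↦ ((Equiv.Perm.sign σ : ℤ) : R)) A :=
  det_apply' A

lemma permanent_eq_permWeightedSum [CommSemiring R] (A : Matrix n n R) :
    A.permanent = permWeightedSum 1 A := by
  simp [permanent, permWeightedSum]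

/-- The number of times the entry `p` occurs in the monomials `∏ i, A (σ j i) i`, `j : ι`. -/
def entryCount {ι : Type*} [Fintype ι] (σ : ι → Equiv.Perm n) (p : n × n) : ℕ :=
  #{x : ι × n | (σ x.1 x.2, x.2) = p}

lemma prod_prod_perm_apply_eq_prod_pow_entryCount {ι M : Type*} [Fintype ι] [CommMonoid M]
    (σ : ι → Equiv.Perm n) (f : n × n → M) :
    ∏ j, ∏ i, f (σ j i, i) = ∏ p, f p ^ entryCount σ p := by
  rw [← Fintype.prod_prod_type', prod_comp]
  refine prod_subset (subset_univ _) fun p _ hp ↦ ?_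
  rw [filter_false_of_mem fun x _ hx ↦ hp (mem_image.mpr ⟨x, mem_univ x, hx⟩), card_empty,
    pow_zero]

lemma permWeightedSum_pow [CommSemiring R] (w : Equiv.Perm n → R) (A : Matrix n n R) (t : ℕ) :
    permWeightedSum w A ^ t = ∑ σ : Fin t → Equiv.Perm n,
      (∏ j, w (σ j)) * ∏ p : n × n, A p.1 p.2 ^ entryCount σ p := by
  simp only [permWeightedSum, Fintype.sum_pow, prod_mul_distrib,
    prod_prod_perm_apply_eq_prod_pow_entryCount _ (fun p ↦ A p.1 p.2)]

lemma ofReal_norm_permWeightedSum_pow_two_mul (w : Equiv.Perm n → ℂ) (A : Matrix n n ℂ)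
    (t : ℕ) :
    ((‖permWeightedSum w A‖ ^ (2 * t) : ℝ) : ℂ) =
      ∑ σ : Fin t → Equiv.Perm n, ∑ τ : Fin t → Equiv.Perm n,
      ((∏ j, w (σ j)) * conj (∏ j, w (τ j))) *
        ∏ p : n × n, A p.1 p.2 ^ entryCount σ p * conj (A p.1 p.2) ^ entryCount τ p := by
  rw [Complex.ofReal_norm_pow_two_mul, ← map_pow, permWeightedSum_pow, map_sum, sum_mul_sum]
  refine sum_congr rfl fun σ _ ↦ sum_congr rfl fun τ _ ↦ ?_
  simp only [map_mul, map_prod, map_pow, prod_mul_distrib]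
  ring

end Matrix

/-- The mixed moment `E ∏ p, z p ^ a p * conj (z p) ^ b p` of i.i.d. standard complex
Gaussians `z p`. -/
def complexGaussianMoment {ι : Type*} [Fintype ι] (a b : ι → ℕ) : ℝ :=
  ∏ p, if a p = b p then ((a p).factorial : ℝ) else 0

lemma complexGaussianMoment_nonneg {ι : Type*} [Fintype ι] (a b : ι → ℕ) :
    0 ≤ complexGaussianMoment a b :=
  prod_nonneg fun p _ ↦ by positivity

namespace IsIIDStdComplexGaussianMatrix

variable {Ω : Type*} [MeasurableSpace Ω] {P : Measure Ω} {k : ℕ}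
  {M : Ω → Matrix (Fin k) (Fin k) ℂ}

open Matrix

lemma integrable_monomial (hM : IsIIDStdComplexGaussianMatrix P M) (a b : Fin k × Fin k → ℕ) :
    Integrable (fun ω ↦ ∏ p, M ω p.1 p.2 ^ a p * conj (M ω p.1 p.2) ^ b p) P := by
  obtain ⟨hmeas, hind, hint, -⟩ := hM
  refine hind.integrable_fun_prod_comp (f := fun p z ↦ z ^ a p * conj z ^ b p)
    (fun p ↦ (hmeas p.1 p.2).aemeasurable) fun p ↦ ?_
  exact (integrable_map_measure (by fun_prop) (hmeas p.1 p.2).aemeasurable).mpr (hint p.1 p.2 _ _)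

lemma integral_monomial (hM : IsIIDStdComplexGaussianMatrix P M) (a b : Fin k × Fin k → ℕ) :
    ∫ ω, ∏ p, M ω p.1 p.2 ^ a p * conj (M ω p.1 p.2) ^ b p ∂P
      = complexGaussianMoment a b := by
  obtain ⟨hmeas, hind, -, hmom⟩ := hM
  rw [hind.integral_fun_prod_comp (f := fun p z ↦ z ^ a p * conj z ^ b p)
    (fun p ↦ (hmeas p.1 p.2).aemeasurable) fun p ↦ by fun_prop]
  simp only [hmom, complexGaussianMoment, Complex.ofReal_prod, apply_ite, Complex.ofReal_natCast,
    Complex.ofReal_zero]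

lemma ofReal_integral_norm_permWeightedSum_pow (hM : IsIIDStdComplexGaussianMatrix P M)
    (w : Equiv.Perm (Fin k) → ℂ) (t : ℕ) :
    ((∫ ω, ‖permWeightedSum w (M ω)‖ ^ (2 * t) ∂P : ℝ) : ℂ)
      = ∑ σ : Fin t → Equiv.Perm (Fin k), ∑ τ : Fin t → Equiv.Perm (Fin k),
          ((∏ j, w (σ j)) * conj (∏ j, w (τ j))) *
            complexGaussianMoment (entryCount σ) (entryCount τ) := by
  have hterm (σ τ : Fin t → Equiv.Perm (Fin k)) := (hM.integrable_monomial (entryCount σ)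
    (entryCount τ)).const_mul ((∏ j, w (σ j)) * conj (∏ j, w (τ j)))
  simp_rw [← integral_complex_ofReal, ofReal_norm_permWeightedSum_pow_two_mul]
  rw [integral_finsetSum _ fun σ _ ↦ integrable_finsetSum _ fun τ _ ↦ hterm σ τ]
  refine sum_congr rfl fun σ _ ↦ ?_
  rw [integral_finsetSum _ fun τ _ ↦ hterm σ τ]
  refine sum_congr rfl fun τ _ ↦ ?_
  rw [integral_const_mul, hM.integral_monomial]

lemma integral_norm_permanent_pow (hM : IsIIDStdComplexGaussianMatrix P M) (t : ℕ) :
    ∫ ω, ‖(M ω).permanent‖ ^ (2 * t) ∂P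
      = ∑ σ : Fin t → Equiv.Perm (Fin k), ∑ τ : Fin t → Equiv.Perm (Fin k),
          complexGaussianMoment (entryCount σ) (entryCount τ) := by
  apply Complex.ofReal_injective
  simpa [permanent_eq_permWeightedSum] using hM.ofReal_integral_norm_permWeightedSum_pow 1 t

theorem integral_norm_permWeightedSum_pow_le (hM : IsIIDStdComplexGaussianMatrix P M)
    {w : Equiv.Perm (Fin k) → ℂ} (hw : ∀ σ, ‖w σ‖ ≤ 1) (t : ℕ) :
    ∫ ω, ‖permWeightedSum w (M ω)‖ ^ (2 * t) ∂P ≤ ∫ ω, ‖(M ω).permanent‖ ^ (2 * t) ∂P := by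
  have hW (σ : Fin t → Equiv.Perm (Fin k)) : ‖∏ j, w (σ j)‖ ≤ 1 := by
    rw [norm_prod]
    exact prod_le_one (fun _ _ ↦ norm_nonneg _) fun j _ ↦ hw (σ j)
  calc ∫ ω, ‖permWeightedSum w (M ω)‖ ^ (2 * t) ∂P
      = ‖((∫ ω, ‖permWeightedSum w (M ω)‖ ^ (2 * t) ∂P : ℝ) : ℂ)‖ := by
        rw [Complex.norm_real, Real.norm_of_nonneg (integral_nonneg fun ω ↦ by positivity)]
    _ ≤ ∑ σ : Fin t → Equiv.Perm (Fin k), ∑ τ : Fin t → Equiv.Perm (Fin k),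
          ‖((∏ j, w (σ j)) * conj (∏ j, w (τ j))) *
            (complexGaussianMoment (entryCount σ) (entryCount τ) : ℂ)‖ := by
        rw [hM.ofReal_integral_norm_permWeightedSum_pow]
        exact (norm_sum_le _ _).trans (sum_le_sum fun σ _ ↦ norm_sum_le _ _)
    _ ≤ ∑ σ : Fin t → Equiv.Perm (Fin k), ∑ τ : Fin t → Equiv.Perm (Fin k),
          complexGaussianMoment (entryCount σ) (entryCount τ) := by
        gcongr with σ _ τ _
        rw [norm_mul, norm_mul, Complex.norm_conj, Complex.norm_real,
          Real.norm_of_nonneg (complexGaussianMoment_nonneg _ _)]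
        exact mul_le_of_le_one_left (complexGaussianMoment_nonneg _ _)
          (mul_le_one₀ (hW σ) (norm_nonneg _) (hW τ))
    _ = ∫ ω, ‖(M ω).permanent‖ ^ (2 * t) ∂P := (hM.integral_norm_permanent_pow t).symm

end IsIIDStdComplexGaussianMatrix

theorem gaussian_det_moment_le_perm_moment_general {Ω : Type*} [MeasurableSpace Ω]
    (P : Measure Ω) (k t : ℕ)
    (M : Ω → Matrix (Fin k) (Fin k) ℂ)
    (hM : IsIIDStdComplexGaussianMatrix P M) :
    ∫ ω, ‖(M ω).det‖ ^ (2*t) ∂P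
      ≤ ∫ ω, ‖(M ω).permanent‖ ^ (2*t) ∂P := by
  simp_rw [Matrix.det_eq_permWeightedSum]
  exact hM.integral_norm_permWeightedSum_pow_le
    (fun σ ↦ by rw [Complex.norm_intCast, abs_unit_intCast]) t

/-- For a random `k × k` matrix with i.i.d. standard complex Gaussian entries,
`E |det M|^(2t) ≤ E |Perm M|^(2t)` for every positive integer `t`. -/
theorem gaussian_det_moment_le_perm_moment {Ω : Type*} [MeasurableSpace Ω]
    (P : Measure Ω) [IsProbabilityMeasure P] (k t : ℕ) (ht : 0 < t)
    (M : Ω → Matrix (Fin k) (Fin k) ℂ)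
    (hM : IsIIDStdComplexGaussianMatrix P M) :
    ∫ ω, ‖(M ω).det‖ ^ (2*t) ∂P
      ≤ ∫ ω, ‖(M ω).permanent‖ ^ (2*t) ∂P :=
  gaussian_det_moment_le_perm_moment_general P k t M hM
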